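/- arXiv:1604.08070 — 2 statements merged into one kernel-verified Lean document; each statement's English description precedes it below -/
import Mathlib

section
/- Weak duality for the generalized Neyman–Pearson problem: for every probability measure Q with density Z_Q ∈ L^∞ and every finite (σ-additive, nonnegative) measure λ on (P_σ, S), sup_{φ ∈ R₀} E[φ H Z_Q] ≤ E[(H Z_Q − H ∫_{P_σ} Z_{P*} dλ(P*))⁺] + Ṽ₀ λ(P_σ). -/
/-!
Split `φ H Z_Q = φ (H Z_Q - H Z_λ) + φ H Z_λ` with `Z_λ = ∫ Z_{P*} dλ`. Since `0 ≤ φ ≤ 1`,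
the first term is at most `(H Z_Q - H Z_λ)⁺`. By Fubini, `E[φ H Z_λ] = ∫ E^{P*}[φ H] dλ(P*)`,
and the capital constraint bounds each `E^{P*}[φ H]` by `Ṽ₀`.
-/

open MeasureTheory Set

/-- The set `R₀` of randomized tests with the capital constraint. -/
def R0 {Ω ι : Type*} [MeasurableSpace Ω] (P : Measure Ω)
    (H : Ω → ℝ) (Z : ι → Ω → ℝ) (V₀ : ℝ) : Set (Ω → ℝ) :=
  {φ | Measurable φ ∧ (∀ ω, φ ω ∈ Set.Icc (0 : ℝ) 1) ∧
    ∀ i, ∫ ω, φ ω * H ω * Z i ω ∂P ≤ V₀}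

lemma Real.norm_le_one_of_mem_Icc {x : ℝ} (hx : x ∈ Icc (0 : ℝ) 1) : ‖x‖ ≤ 1 := by
  rw [Real.norm_of_nonneg hx.1]
  exact hx.2

section Mixture

variable {Ω ι : Type*} [MeasurableSpace Ω] [MeasurableSpace ι]
  {P : Measure Ω} {μ : Measure ι}

lemma integrable_uncurry_of_integral_eq_one [SFinite P] [IsFiniteMeasure μ]
    {Z : ι → Ω → ℝ} (hZ : AEStronglyMeasurable (Function.uncurry Z) (μ.prod P))
    (hZ_nonneg : ∀ i ω, 0 ≤ Z i ω) (hZ_one : ∀ i, ∫ ω, Z i ω ∂P = 1) :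
    Integrable (Function.uncurry Z) (μ.prod P) := by
  refine (integrable_prod_iff hZ).mpr ⟨ae_of_all _ fun i => ?_, ?_⟩
  · exact Integrable.of_integral_ne_zero (by simp [hZ_one i])
  · simp only [Function.uncurry_apply_pair, Real.norm_of_nonneg (hZ_nonneg _ _), hZ_one]
    exact integrable_const 1

lemma integrable_mul_uncurry_of_integrable_mul_integral [SFinite P] [SFinite μ]
    {Z : ι → Ω → ℝ} {H : Ω → ℝ} (hZ : Integrable (Function.uncurry Z) (μ.prod P))
    (hZ_nonneg : ∀ i ω, 0 ≤ Z i ω) (hH : AEStronglyMeasurable H P)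
    (hmix : Integrable (fun ω => H ω * ∫ i, Z i ω ∂μ) P) :
    Integrable (fun p : ι × Ω => H p.2 * Z p.1 p.2) (μ.prod P) := by
  have hHZ : AEStronglyMeasurable (fun p : ι × Ω => H p.2 * Z p.1 p.2) (μ.prod P) :=
    hH.comp_snd.mul hZ.1
  refine (integrable_prod_iff' hHZ).mpr ⟨?_, ?_⟩
  · filter_upwards [hZ.prod_left_ae] with ω hω
    exact hω.const_mul (H ω)
  · refine hmix.norm.congr (ae_of_all _ fun ω => ?_)
    simp only [norm_mul, Real.norm_of_nonneg (hZ_nonneg _ _),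
      Real.norm_of_nonneg (integral_nonneg fun i => hZ_nonneg i ω), integral_const_mul]

lemma integral_integral_le_of_forall_integral_le [SFinite P] [IsFiniteMeasure μ]
    {k : ι → Ω → ℝ} (hk : Integrable (Function.uncurry k) (μ.prod P)) {V : ℝ}
    (hV : ∀ i, ∫ ω, k i ω ∂P ≤ V) :
    ∫ ω, ∫ i, k i ω ∂μ ∂P ≤ V * μ.real univ := by
  rw [← integral_integral_swap hk]
  calc ∫ i, ∫ ω, k i ω ∂P ∂μ ≤ ∫ _, V ∂μ :=
        integral_mono hk.integral_prod_left (integrable_const V) hV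
    _ = V * μ.real univ := by rw [integral_const, smul_eq_mul, mul_comm]

end Mixture

lemma integral_mul_le_integral_posPart_sub_add {Ω : Type*} [MeasurableSpace Ω]
    {P : Measure Ω} {φ a b : Ω → ℝ} (hφ : AEStronglyMeasurable φ P) (hφ01 : ∀ ω, φ ω ∈ Icc (0 : ℝ) 1)
    (ha : Integrable a P) (hb : Integrable b P) :
    ∫ ω, φ ω * a ω ∂P ≤ ∫ ω, max (a ω - b ω) 0 ∂P + ∫ ω, φ ω * b ω ∂P := by
  have hφ_bdd : ∀ᵐ ω ∂P, ‖φ ω‖ ≤ 1 :=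
    ae_of_all _ fun ω => Real.norm_le_one_of_mem_Icc (hφ01 ω)
  have hφ_sub : Integrable (fun ω => φ ω * (a ω - b ω)) P :=
    (ha.sub hb).bdd_mul hφ hφ_bdd
  have hφb := hb.bdd_mul hφ hφ_bdd
  have hφ_sub_le : ∀ ω, φ ω * (a ω - b ω) ≤ max (a ω - b ω) 0 := fun ω => by
    rcases le_total 0 (a ω - b ω) with h | h
    · exact (mul_le_of_le_one_left h (hφ01 ω).2).trans (le_max_left _ _)
    · exact (mul_nonpos_of_nonneg_of_nonpos (hφ01 ω).1 h).trans (le_max_right _ _)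
  calc ∫ ω, φ ω * a ω ∂P = ∫ ω, φ ω * (a ω - b ω) ∂P + ∫ ω, φ ω * b ω ∂P := by
        rw [← integral_add hφ_sub hφb]
        simp only [mul_sub, sub_add_cancel]
    _ ≤ ∫ ω, max (a ω - b ω) 0 ∂P + ∫ ω, φ ω * b ω ∂P := by
        gcongr 1
        exact integral_mono hφ_sub (ha.sub hb).pos_part hφ_sub_le

theorem weak_duality_neyman_pearson_general
    {Ω : Type*} [MeasurableSpace Ω] (P : Measure Ω) [IsProbabilityMeasure P]
    {ι : Type*} [MeasurableSpace ι]
    (H : Ω → ℝ) (hHint : Integrable H P)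
    (Z : ι → Ω → ℝ) (hZpos : ∀ i ω, 0 ≤ Z i ω)
    (hZprob : ∀ i, ∫ ω, Z i ω ∂P = 1)
    (hjoint : Measurable fun p : ι × Ω => Z p.1 p.2)
    (V₀ : ℝ)
    (ZQ : Ω → ℝ) (hZQmeas : Measurable ZQ) (hZQpos : ∀ ω, 0 ≤ ZQ ω)
    (hZQbdd : ∃ C, ∀ ω, ZQ ω ≤ C)
    (μ : Measure ι) [IsFiniteMeasure μ]
    (hmix : Integrable (fun ω => H ω * ∫ i, Z i ω ∂μ) P) :
    ∀ φ ∈ R0 P H Z V₀,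
      ∫ ω, φ ω * H ω * ZQ ω ∂P ≤
        (∫ ω, max (H ω * ZQ ω - H ω * ∫ i, Z i ω ∂μ) 0 ∂P)
          + V₀ * (μ Set.univ).toReal := by
  rintro φ ⟨hφ, hφ01, hφV⟩
  obtain ⟨C, hC⟩ := hZQbdd
  have hZ :=
    integrable_uncurry_of_integral_eq_one (μ := μ) hjoint.aestronglyMeasurable hZpos hZprob
  have hφHZ : Integrable (fun p : ι × Ω => φ p.2 * H p.2 * Z p.1 p.2) (μ.prod P) := by
    simpa only [mul_assoc] using
      (integrable_mul_uncurry_of_integrable_mul_integral hZ hZpos hHint.1 hmix).bdd_mul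
        hφ.aestronglyMeasurable.comp_snd
        (ae_of_all _ fun p => Real.norm_le_one_of_mem_Icc (hφ01 p.2))
  have hHZQ : Integrable (fun ω => H ω * ZQ ω) P := by
    simpa only [mul_comm] using hHint.bdd_mul hZQmeas.aestronglyMeasurable (c := C)
      (ae_of_all _ fun ω => by rw [Real.norm_of_nonneg (hZQpos ω)]; exact hC ω)
  have hconstraint := integral_integral_le_of_forall_integral_le hφHZ hφV
  simp only [integral_const_mul, mul_assoc] at hconstraint
  simpa only [mul_assoc, ← measureReal_def] using
    (integral_mul_le_integral_posPart_sub_add hφ.aestronglyMeasurable hφ01 hHZQ hmix).trans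
      (by gcongr)

/-- Weak duality for the generalized Neyman–Pearson problem: for every density
`Z_Q ∈ L^∞` and every finite measure `λ` on `(P_σ, S)`,
`sup_{φ ∈ R₀} E[φ H Z_Q] ≤ E[(H Z_Q − H ∫ Z_{P*} dλ)⁺] + Ṽ₀ λ(P_σ)`. -/
theorem weak_duality_neyman_pearson
    {Ω : Type*} [MeasurableSpace Ω] (P : Measure Ω) [IsProbabilityMeasure P]
    {ι : Type*} [Nonempty ι] [MeasurableSpace ι]
    (H : Ω → ℝ) (hHmeas : Measurable H) (hHint : Integrable H P)
    (hHpos : ∀ ω, 0 ≤ H ω)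
    (Z : ι → Ω → ℝ) (hZmeas : ∀ i, Measurable (Z i)) (hZpos : ∀ i ω, 0 ≤ Z i ω)
    (hZprob : ∀ i, ∫ ω, Z i ω ∂P = 1)
    (hjoint : Measurable fun p : ι × Ω => Z p.1 p.2)
    (hU₀ : BddAbove (Set.range fun i => ∫ ω, H ω * Z i ω ∂P))
    (V₀ : ℝ) (hV₀ : 0 < V₀)
    (ZQ : Ω → ℝ) (hZQmeas : Measurable ZQ) (hZQpos : ∀ ω, 0 ≤ ZQ ω)
    (hZQbdd : ∃ C, ∀ ω, ZQ ω ≤ C) (hZQprob : ∫ ω, ZQ ω ∂P = 1)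
    (μ : Measure ι) [IsFiniteMeasure μ]
    (hmix : Integrable (fun ω => H ω * ∫ i, Z i ω ∂μ) P) :
    ∀ φ ∈ R0 P H Z V₀,
      ∫ ω, φ ω * H ω * ZQ ω ∂P ≤
        (∫ ω, max (H ω * ZQ ω - H ω * ∫ i, Z i ω ∂μ) 0 ∂P)
          + V₀ * (μ Set.univ).toReal :=
  weak_duality_neyman_pearson_general P H hHint Z hZpos hZprob hjoint V₀ ZQ hZQmeas hZQpos hZQbdd μ
    hmix
end

section
/- Decomposition of the dynamic problem: if φ̃ solves min_{φ∈R₀} ρ((φ−1)H) and ξ̃ is a superhedging strategy for the modified claim φ̃H (i.e., Ũ₀ + ∫₀ᵀ ξ̃ dS ≥ φ̃H where Ũ₀ = sup_{P*∈P_σ}E^{P*}[φ̃H] ≤ Ṽ₀), then the strategy (Ṽ₀, ξ̃) minimizes ρ(−(H−V_T)⁺) over all admissible strategies (V₀,ξ) with 0 < V₀ ≤ Ṽ₀, and min_{(V₀,ξ)} ρ(−(H−V_T)⁺) = min_{φ∈R₀} ρ((φ−1)H). -/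
/-!
Given any admissible terminal value `V_T` with initial capital at most `Ṽ₀`, the success ratio
`φ = min 1 (V_T / H)` is a randomized test in `R₀`, since `φ H = min H V_T ≤ V_T` and `V_T` costs at
most `Ṽ₀` under every `P*`; moreover `(φ - 1) H = -(H - V_T)⁺`. Hence the static minimum is a lower
bound for the shortfall risk of every admissible strategy. Conversely, the superhedge `Ṽ_T ≥ φ̃ H`
gives `-(H - Ṽ_T)⁺ ≥ (φ̃ - 1) H` pointwise, so by monotonicity the strategy attains that bound.
-/

open MeasureTheory Set

/-- Where `H = 0` the quotient is `0` (Lean's `x / 0 = 0`), which is harmless since there `φ H = 0`. -/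
noncomputable def successRatio {Ω : Type*} (H V : Ω → ℝ) : Ω → ℝ :=
  fun ω => min 1 (V ω / H ω)

lemma min_one_div_mul {h v : ℝ} (hh : 0 ≤ h) (hv : 0 ≤ v) : min 1 (v / h) * h = min h v := by
  rcases hh.eq_or_lt with rfl | hpos
  · simp [hv]
  · rw [min_mul_of_nonneg _ _ hh, one_mul, div_mul_cancel₀ _ hpos.ne']

lemma min_one_div_sub_one_mul {h v : ℝ} (hh : 0 ≤ h) (hv : 0 ≤ v) :
    (min 1 (v / h) - 1) * h = -max (h - v) 0 := by
  rw [sub_one_mul, min_one_div_mul hh hv]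
  rcases le_total h v with hle | hle
  · rw [min_eq_left hle, max_eq_right (by linarith)]
    simp
  · rw [min_eq_right hle, max_eq_left (by linarith)]
    ring

lemma sub_one_mul_le_neg_max_sub {φ h v : ℝ} (hφ : φ ≤ 1) (hh : 0 ≤ h) (hφv : φ * h ≤ v) :
    (φ - 1) * h ≤ -max (h - v) 0 :=
  le_neg.2 (max_le (by linarith) (by nlinarith))

lemma successRatio_mem_R0 {Ω ι : Type*} [MeasurableSpace Ω] {P : Measure Ω}
    {H V : Ω → ℝ} {Z : ι → Ω → ℝ} {c : ℝ}
    (hHmeas : Measurable H) (hHpos : ∀ ω, 0 ≤ H ω) (hZpos : ∀ i ω, 0 ≤ Z i ω)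
    (hVmeas : Measurable V) (hVpos : ∀ ω, 0 ≤ V ω)
    (hVZ : ∀ i, Integrable (fun ω => V ω * Z i ω) P ∧ ∫ ω, V ω * Z i ω ∂P ≤ c) :
    successRatio H V ∈ R0 P H Z c := by
  refine ⟨measurable_const.min (hVmeas.div hHmeas),
    fun ω => ⟨le_min zero_le_one (div_nonneg (hVpos ω) (hHpos ω)), min_le_left _ _⟩,
    fun i => ?_⟩
  have hmul : ∀ ω, successRatio H V ω * H ω * Z i ω = min (H ω) (V ω) * Z i ω := fun ω => by
    rw [successRatio, min_one_div_mul (hHpos ω) (hVpos ω)]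
  calc ∫ ω, successRatio H V ω * H ω * Z i ω ∂P = ∫ ω, min (H ω) (V ω) * Z i ω ∂P := by
        simp_rw [hmul]
    _ ≤ ∫ ω, V ω * Z i ω ∂P :=
        integral_mono_of_nonneg
          (ae_of_all _ fun ω => mul_nonneg (le_min (hHpos ω) (hVpos ω)) (hZpos i ω))
          (hVZ i).1
          (ae_of_all _ fun ω => mul_le_mul_of_nonneg_right (min_le_right _ _) (hZpos i ω))
    _ ≤ c := (hVZ i).2

/-- `𝒱 c` stands for the terminal values of admissible strategies with initial capital `c`, through
the properties the `P_σ`-supermartingale property gives them. -/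
theorem decomposition_of_dynamic_problem_general
    {Ω : Type*} [MeasurableSpace Ω] (P : Measure Ω)
    {ι : Type*}
    (H : Ω → ℝ) (hHmeas : Measurable H)
    (hHpos : ∀ ω, 0 ≤ H ω)
    (Z : ι → Ω → ℝ) (hZpos : ∀ i ω, 0 ≤ Z i ω)
    (ρ : (Ω → ℝ) → EReal)
    (hmono : ∀ X Y : Ω → ℝ, (∀ ω, X ω ≤ Y ω) → ρ Y ≤ ρ X)
    (𝒱 : ℝ → Set (Ω → ℝ))
    (h𝒱 : ∀ c, ∀ X ∈ 𝒱 c, Measurable X ∧ (∀ ω, 0 ≤ X ω) ∧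
      ∀ i, Integrable (fun ω => X ω * Z i ω) P ∧ ∫ ω, X ω * Z i ω ∂P ≤ c)
    (Vt₀ : ℝ)
    (φt : Ω → ℝ) (hφt : φt ∈ R0 P H Z Vt₀)
    (hφtmin : ∀ φ ∈ R0 P H Z Vt₀,
      ρ (fun ω => (φt ω - 1) * H ω) ≤ ρ (fun ω => (φ ω - 1) * H ω))
    (VTt : Ω → ℝ) (hVTt : VTt ∈ 𝒱 Vt₀)
    (hhedge : ∀ ω, φt ω * H ω ≤ VTt ω) :
    (∀ V₀ ∈ Set.Ioc (0 : ℝ) Vt₀, ∀ VT ∈ 𝒱 V₀,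
      ρ (fun ω => -(max (H ω - VTt ω) 0)) ≤ ρ (fun ω => -(max (H ω - VT ω) 0))) ∧
    ρ (fun ω => -(max (H ω - VTt ω) 0)) = ρ (fun ω => (φt ω - 1) * H ω) := by
  have lower : ∀ V₀ ≤ Vt₀, ∀ VT ∈ 𝒱 V₀,
      ρ (fun ω => (φt ω - 1) * H ω) ≤ ρ (fun ω => -(max (H ω - VT ω) 0)) := by
    intro V₀ hV₀ VT hVT
    obtain ⟨hVTmeas, hVTpos, hVTZ⟩ := h𝒱 V₀ VT hVT
    have hφ := hφtmin _ (successRatio_mem_R0 hHmeas hHpos hZpos hVTmeas hVTpos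
      fun i => ⟨(hVTZ i).1, (hVTZ i).2.trans hV₀⟩)
    simpa only [successRatio, min_one_div_sub_one_mul (hHpos _) (hVTpos _)] using hφ
  have upper : ρ (fun ω => -(max (H ω - VTt ω) 0)) ≤ ρ (fun ω => (φt ω - 1) * H ω) :=
    hmono _ _ fun ω => sub_one_mul_le_neg_max_sub (hφt.2.1 ω).2 (hHpos ω) (hhedge ω)
  exact ⟨fun V₀ hV₀ VT hVT => upper.trans (lower V₀ hV₀.2 VT hVT),
    upper.antisymm (lower Vt₀ le_rfl VTt hVTt)⟩

/-- Decomposition of the dynamic problem: if `φ̃` solves the static problem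
`min_{φ∈R₀} ρ((φ−1)H)` and `Ṽ_T` is the terminal value of a superhedging
strategy for the modified claim `φ̃H` with initial capital `Ṽ₀`, then this
strategy minimizes the shortfall risk `ρ(−(H−V_T)⁺)` over all admissible
strategies with initial capital `0 < V₀ ≤ Ṽ₀`, and the dynamic and static
minimal values coincide. Here `𝒱 c` denotes the set of terminal values of
admissible strategies with initial capital `c`; by the supermartingale property
each `X ∈ 𝒱 c` is nonnegative, measurable and satisfies `E^{P*}[X] ≤ c`. -/
theorem decomposition_of_dynamic_problem
    {Ω : Type*} [MeasurableSpace Ω] (P : Measure Ω) [IsProbabilityMeasure P]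
    {ι : Type*} [Nonempty ι]
    (H : Ω → ℝ) (hHmeas : Measurable H) (hHint : Integrable H P)
    (hHpos : ∀ ω, 0 ≤ H ω)
    (Z : ι → Ω → ℝ) (hZmeas : ∀ i, Measurable (Z i)) (hZpos : ∀ i ω, 0 ≤ Z i ω)
    (hZprob : ∀ i, ∫ ω, Z i ω ∂P = 1)
    (ρ : (Ω → ℝ) → EReal)
    (hρ0 : ρ 0 = 0)
    (hmono : ∀ X Y : Ω → ℝ, (∀ ω, X ω ≤ Y ω) → ρ Y ≤ ρ X)
    (htrans : ∀ (X : Ω → ℝ) (c : ℝ), ρ (fun ω => X ω + c) = ρ X - (c : EReal))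
    (hconv : ∀ (X Y : Ω → ℝ) (t : ℝ), t ∈ Set.Icc (0 : ℝ) 1 →
      ρ (fun ω => t * X ω + (1 - t) * Y ω)
        ≤ (t : EReal) * ρ X + ((1 - t : ℝ) : EReal) * ρ Y)
    (𝒱 : ℝ → Set (Ω → ℝ))
    (h𝒱 : ∀ c, ∀ X ∈ 𝒱 c, Measurable X ∧ (∀ ω, 0 ≤ X ω) ∧
      ∀ i, Integrable (fun ω => X ω * Z i ω) P ∧ ∫ ω, X ω * Z i ω ∂P ≤ c)
    (Vt₀ : ℝ) (hVt₀ : 0 < Vt₀)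
    (φt : Ω → ℝ) (hφt : φt ∈ R0 P H Z Vt₀)
    (hφtmin : ∀ φ ∈ R0 P H Z Vt₀,
      ρ (fun ω => (φt ω - 1) * H ω) ≤ ρ (fun ω => (φ ω - 1) * H ω))
    (VTt : Ω → ℝ) (hVTt : VTt ∈ 𝒱 Vt₀)
    (hhedge : ∀ ω, φt ω * H ω ≤ VTt ω) :
    (∀ V₀ ∈ Set.Ioc (0 : ℝ) Vt₀, ∀ VT ∈ 𝒱 V₀,
      ρ (fun ω => -(max (H ω - VTt ω) 0)) ≤ ρ (fun ω => -(max (H ω - VT ω) 0))) ∧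
    ρ (fun ω => -(max (H ω - VTt ω) 0)) = ρ (fun ω => (φt ω - 1) * H ω) :=
  decomposition_of_dynamic_problem_general P H hHmeas hHpos Z hZpos ρ hmono 𝒱 h𝒱 Vt₀ φt hφt hφtmin
    VTt hVTt hhedge
end
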